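/- Let B be a closed, densely defined linear operator on H × H with domain Dom B. Suppose there exists λ ∈ ℂ such that B − λ maps Dom B bijectively onto H × H with bounded inverse R := (B − λ)^{−1}, and suppose that, writing R_{ij} := π_i ∘ R ∘ ι_j for i,j ∈ {1,2}, the operators R₁₁, R₁₂ and R₂₂ are compact operators on H. Then the set Σ := {μ ∈ ℂ : B − μ does not map Dom B bijectively onto H × H with bounded inverse} is a discrete subset of ℂ (it has no accumulation point in ℂ), every μ ∈ Σ is an eigenvalue of B (there exists a nonzero x ∈ Dom B with Bx = μx), and for every μ ∈ Σ the generalized eigenspace ⋃_{m ≥ 1} ker((B − μ)^m) is finite-dimensional, where ker((B − μ)^m) := {x ∈ H × H : x, (B−μ)x, …, (B−μ)^{m−1}x all lie in Dom B and (B−μ)^m x = 0}. -/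

import Mathlib

/-!
Write `R = C + N`, where `N` is the lower left block `R₂₁` (so `N² = 0`) and `C` is compact.
Every `μ ≠ 0` lies in the resolvent set of `N`, and `μ - R = (μ - N)(1 - (μ - N)⁻¹ C)`
with `(μ - N)⁻¹ C` compact, so the Fredholm alternative holds for `R`; moreover `R² = C R + N C`
is compact. Since `B - μ = (B - λ)(1 - (μ - λ) R)` on `Dom B`, a point `μ` of `Σ` gives the
eigenvalue `(μ - λ)⁻¹` of `R`, and generalized eigenvectors of `B` at `μ` are generalized
eigenvectors of `R`, hence of `R²`, at the corresponding eigenvalue. Riesz's lemma shows that a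
compact operator has no infinite chain of closed subspaces `M₀ < M₁ < ⋯` with
`(T - cₙ) Mₙ₊₁ ⊆ Mₙ` and `|cₙ|` bounded below; this gives both that the eigenvalues of `R` stay
away from `0` on bounded sets of `Σ` and that its generalized eigenspaces are finite-dimensional.
-/

open Filter Topology Module End

theorem Module.End.genEigenspace_nat_succ {R M : Type*} [CommRing R] [AddCommGroup M] [Module R M]
    (f : End R M) (μ : R) (k : ℕ) :
    f.genEigenspace μ (k + 1 : ℕ) = (f.genEigenspace μ k).comap (f - μ • 1) := by
  ext x
  rw [Submodule.mem_comap, mem_genEigenspace_nat, mem_genEigenspace_nat, LinearMap.mem_ker,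
    LinearMap.mem_ker, pow_succ, Module.End.mul_apply]

theorem Module.End.maxGenEigenspace_le_maxGenEigenspace_pow {R M : Type*} [CommRing R]
    [AddCommGroup M] [Module R M] (f : End R M) (μ : R) (k : ℕ) :
    maxGenEigenspace f μ ≤ maxGenEigenspace (f ^ k) (μ ^ k) := by
  have hcomm : Commute f (μ • 1) := (Commute.one_right f).smul_right μ
  set p := ∑ i ∈ Finset.range k, f ^ i * (μ • 1) ^ (k - 1 - i)
  have hfactor : f ^ k - μ ^ k • 1 = p * (f - μ • 1) := by
    rw [hcomm.geom_sum₂_mul, smul_pow, one_pow]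
  have hpcomm : Commute p (f - μ • 1) := by
    rw [Commute, SemiconjBy, ← hfactor, hcomm.mul_geom_sum₂, smul_pow, one_pow]
  intro x hx
  obtain ⟨j, hj⟩ := (mem_maxGenEigenspace _ _ _).1 hx
  refine (mem_maxGenEigenspace _ _ _).2 ⟨j, ?_⟩
  rw [hfactor, hpcomm.mul_pow, Module.End.mul_apply, hj, map_zero]

theorem Module.End.mem_maxGenEigenspace_of_sub_smul_mem {R M : Type*} [CommRing R]
    [AddCommGroup M] [Module R M] {f : End R M} {μ : R} {x : M}
    (h : (f - μ • 1) x ∈ maxGenEigenspace f μ) : x ∈ maxGenEigenspace f μ := by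
  obtain ⟨k, hk⟩ := (mem_maxGenEigenspace _ _ _).1 h
  exact (mem_maxGenEigenspace _ _ _).2 ⟨k + 1, by rwa [pow_succ, Module.End.mul_apply]⟩

theorem mem_resolventSet_of_isNilpotent {𝕜 A : Type*} [Field 𝕜] [Ring A] [Algebra 𝕜 A] {a : A}
    (ha : IsNilpotent a) {μ : 𝕜} (hμ : μ ≠ 0) : μ ∈ resolventSet 𝕜 a := by
  rw [spectrum.mem_resolventSet_iff, sub_eq_add_neg]
  exact ha.neg.isUnit_add_left_of_commute (hμ.isUnit.map _) (Algebra.commutes μ (-a)).symm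

theorem isUnit_one_sub_smul_of_inv_mem_resolventSet {𝕜 A : Type*} [Field 𝕜] [Ring A]
    [Algebra 𝕜 A] {a : A} {z : 𝕜} (hz : z ≠ 0) (h : z⁻¹ ∈ resolventSet 𝕜 a) :
    IsUnit (1 - z • a) := by
  have : 1 - z • a = algebraMap 𝕜 A z * (algebraMap 𝕜 A z⁻¹ - a) := by
    rw [mul_sub, ← map_mul, mul_inv_cancel₀ hz, map_one, Algebra.algebraMap_eq_smul_one,
      smul_one_mul]
  rw [this]
  exact (hz.isUnit.map _).mul (spectrum.mem_resolventSet_iff.1 h)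

section RieszTheory

variable {𝕜 X : Type*} [RCLike 𝕜] [NormedAddCommGroup X] [NormedSpace 𝕜 X]

theorem Submodule.exists_norm_eq_one_forall_le_norm_sub {W V : Submodule 𝕜 X}
    (hW : IsClosed (W : Set X)) (hWV : W < V) {r : ℝ} (hr : r < 1) :
    ∃ e ∈ V, ‖e‖ = 1 ∧ ∀ w ∈ W, r ≤ ‖e - w‖ := by
  obtain ⟨x, hxV, hxW⟩ := SetLike.exists_of_lt hWV
  obtain ⟨e, -, he, hfar⟩ := riesz_lemma_of_lt_one (F := W.comap V.subtype)
    (hW.preimage continuous_subtype_val) ⟨⟨x, hxV⟩, hxW⟩ hr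
  exact ⟨e, e.2, he, fun w hw ↦ hfar ⟨w, hWV.le hw⟩ hw⟩

theorem IsCompactOperator.exists_norm_sub_lt {T : X →L[𝕜] X} (hT : IsCompactOperator T)
    {x : ℕ → X} {r : ℝ} (hx : ∀ n, ‖x n‖ ≤ r) {δ : ℝ} (hδ : 0 < δ) :
    ∃ m n, m < n ∧ ‖T (x n) - T (x m)‖ < δ := by
  obtain ⟨K, hK, hTK⟩ := hT.image_closedBall_subset_compact r
  obtain ⟨_, -, φ, hφ, hlim⟩ := hK.tendsto_subseq fun n ↦ hTK ⟨x n, by simpa using hx n, rfl⟩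
  obtain ⟨N, hN⟩ := Metric.cauchySeq_iff'.1 hlim.cauchySeq δ hδ
  exact ⟨φ N, φ (N + 1), hφ N.lt_succ_self, by simpa [dist_eq_norm] using hN (N + 1) N.le_succ⟩

theorem IsCompactOperator.exists_succ_le_of_sub_smul_mem {T : X →L[𝕜] X}
    (hT : IsCompactOperator T) {M : ℕ → Submodule 𝕜 X} (hM : Monotone M)
    (hMc : ∀ n, IsClosed (M n : Set X)) {c : ℕ → 𝕜} {δ : ℝ} (hδ : 0 < δ) (hc : ∀ n, δ ≤ ‖c n‖)
    (hTM : ∀ n, ∀ v ∈ M (n + 1), T v - c n • v ∈ M n) :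
    ∃ n, M (n + 1) ≤ M n := by
  by_contra! hstrict
  have hlt n : M n < M (n + 1) := lt_of_le_not_ge (hM n.le_succ) (hstrict n)
  choose e heM he hfar using fun n ↦
    Submodule.exists_norm_eq_one_forall_le_norm_sub (hMc n) (hlt n) (r := 1 / 2) (by norm_num)
  obtain ⟨m, n, hmn, hclose⟩ := hT.exists_norm_sub_lt (fun n ↦ (he n).le) (half_pos hδ)
  -- `T e n - T e m` is `c n • e n` up to an element `w` of `M n`
  set w := c n • e n - (T (e n) - T (e m))
  have hTem : T (e m) ∈ M n := by
    have := Submodule.add_mem _ (hM m.le_succ (hTM m _ (heM m)))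
      (Submodule.smul_mem _ (c m) (heM m))
    exact hM hmn (by simpa using this)
  have hw : w ∈ M n := by
    have := Submodule.add_mem _ (Submodule.neg_mem _ (hTM n _ (heM n))) hTem
    convert this using 1
    simp only [w]; abel
  have hcn : c n ≠ 0 := norm_pos_iff.1 (hδ.trans_le (hc n))
  have : δ / 2 ≤ ‖T (e n) - T (e m)‖ := calc
    δ / 2 ≤ ‖c n‖ * (1 / 2) := by linarith [hc n]
    _ ≤ ‖c n‖ * ‖e n - (c n)⁻¹ • w‖ :=
      by gcongr; exact hfar n _ (Submodule.smul_mem _ _ hw)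
    _ = ‖T (e n) - T (e m)‖ := by
      rw [← norm_smul, smul_sub, smul_inv_smul₀ hcn]; simp only [w]; abel_nf
  linarith

theorem IsCompactOperator.not_linearIndependent_of_apply_eq_smul {T : X →L[𝕜] X}
    (hT : IsCompactOperator T) {u : ℕ → X} {c : ℕ → 𝕜} (hTu : ∀ n, T (u n) = c n • u n)
    {δ : ℝ} (hδ : 0 < δ) (hc : ∀ n, δ ≤ ‖c n‖) : ¬ LinearIndependent 𝕜 u := by
  intro hu
  let M n := Submodule.span 𝕜 (u '' Set.Iio n)
  have hM : Monotone M := fun a b h ↦ Submodule.span_mono (Set.image_mono (Set.Iio_subset_Iio h))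
  have hMc n : IsClosed (M n : Set X) :=
    haveI := FiniteDimensional.span_of_finite 𝕜 ((Set.finite_Iio n).image u)
    Submodule.closed_of_finiteDimensional _
  have hTM n : ∀ v ∈ M (n + 1), T v - c n • v ∈ M n := by
    suffices M (n + 1) ≤ (M n).comap ((T : End 𝕜 X) - c n • 1) from fun v hv ↦ by
      simpa using this hv
    refine Submodule.span_le.2 ?_
    rintro _ ⟨i, hi, rfl⟩
    rcases Nat.lt_succ_iff_lt_or_eq.1 hi with hi | rfl
    · simpa [hTu, ← sub_smul] using
        (M n).smul_mem (c i - c n) (Submodule.subset_span (Set.mem_image_of_mem u hi))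
    · simp [hTu]
  obtain ⟨n, hn⟩ := hT.exists_succ_le_of_sub_smul_mem hM hMc hδ hc hTM
  exact hu.notMem_span_image (s := Set.Iio n) (lt_irrefl n)
    (hn (Submodule.subset_span (Set.mem_image_of_mem u n.lt_succ_self)))

theorem IsCompactOperator.finiteDimensional_eigenspace {T : X →L[𝕜] X} (hT : IsCompactOperator T)
    {μ : 𝕜} (hμ : μ ≠ 0) : FiniteDimensional 𝕜 (eigenspace (T : End 𝕜 X) μ) := by
  have := hT.restrict (eigenspace_mem_invtSubmodule (T : End 𝕜 X) μ) (T.isClosed_eigenspace μ)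
  rw [restrict_eigenspace, LinearMap.coe_smul, IsCompactOperator.smul_iff₀ hμ] at this
  rwa [← isCompactOperator_id_iff_finiteDimensional]

theorem IsCompactOperator.finiteDimensional_genEigenspace {T : X →L[𝕜] X}
    (hT : IsCompactOperator T) {μ : 𝕜} (hμ : μ ≠ 0) (n : ℕ) :
    FiniteDimensional 𝕜 (genEigenspace (T : End 𝕜 X) μ n) := by
  induction n with
  | zero => rw [CharP.cast_eq_zero, genEigenspace_zero]; infer_instance
  | succ n ih =>
    have := hT.finiteDimensional_eigenspace hμ
    rw [eigenspace_def] at this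
    rw [genEigenspace_nat_succ]
    infer_instance

theorem IsCompactOperator.finiteDimensional_maxGenEigenspace {T : X →L[𝕜] X}
    (hT : IsCompactOperator T) {μ : 𝕜} (hμ : μ ≠ 0) :
    FiniteDimensional 𝕜 (maxGenEigenspace (T : End 𝕜 X) μ) := by
  let M (n : ℕ) := genEigenspace (T : End 𝕜 X) μ n
  have hM : Monotone M := fun a b h ↦
    (genEigenspace (T : End 𝕜 X) μ).monotone (by exact_mod_cast h)
  have hTM n : ∀ v ∈ M (n + 1), T v - μ • v ∈ M n := fun v hv ↦ by
    simpa [M, genEigenspace_nat_succ] using hv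
  obtain ⟨n, hn⟩ := hT.exists_succ_le_of_sub_smul_mem hM (fun n ↦ T.isClosed_genEigenspace μ n)
    (norm_pos_iff.2 hμ) (fun _ ↦ le_rfl) hTM
  have hle k : M k ≤ M n := by
    induction k with
    | zero => exact hM (Nat.zero_le n)
    | succ k ih =>
      intro v hv
      apply hn
      simp only [M, genEigenspace_nat_succ, Submodule.mem_comap] at hv ⊢
      exact ih hv
  have := hT.finiteDimensional_genEigenspace hμ n
  exact Submodule.finiteDimensional_of_le ((iSup_genEigenspace_eq _ μ).symm.le.trans (iSup_le hle))

section PowerCompact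

variable {R : X →L[𝕜] X} {k : ℕ}

theorem IsCompactOperator.finite_setOf_hasEigenvalue_le_norm_of_pow
    (hR : IsCompactOperator ⇑(R ^ k)) {δ : ℝ} (hδ : 0 < δ) :
    {μ | HasEigenvalue (R : End 𝕜 X) μ ∧ δ ≤ ‖μ‖}.Finite := by
  by_contra hinf
  let μ (n : ℕ) : 𝕜 := Set.Infinite.natEmbedding _ hinf n
  have hμ n : HasEigenvalue (R : End 𝕜 X) (μ n) ∧ δ ≤ ‖μ n‖ :=
    (Set.Infinite.natEmbedding _ hinf n).2
  choose u hu using fun n ↦ (hμ n).1.exists_hasEigenvector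
  refine hR.not_linearIndependent_of_apply_eq_smul (c := fun n ↦ μ n ^ k) (fun n ↦ ?_)
    (pow_pos hδ k) (fun n ↦ ?_) (eigenvectors_linearIndependent' _ μ ?_ u hu)
  · rw [← (hu n).pow_apply k, ← ContinuousLinearMap.toLinearMap_pow]; rfl
  · rw [norm_pow]; exact pow_le_pow_left₀ hδ.le (hμ n).2 k
  · exact fun a b h ↦ (Set.Infinite.natEmbedding _ hinf).injective (Subtype.ext h)

theorem IsCompactOperator.finiteDimensional_maxGenEigenspace_of_pow
    (hR : IsCompactOperator ⇑(R ^ k)) {μ : 𝕜} (hμ : μ ≠ 0) :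
    FiniteDimensional 𝕜 (maxGenEigenspace (R : End 𝕜 X) μ) := by
  have := hR.finiteDimensional_maxGenEigenspace (pow_ne_zero k hμ)
  rw [ContinuousLinearMap.toLinearMap_pow] at this
  exact Submodule.finiteDimensional_of_le (maxGenEigenspace_le_maxGenEigenspace_pow _ μ k)

end PowerCompact

end RieszTheory

section CompactPerturbation

variable {𝕜 X : Type*} [NontriviallyNormedField 𝕜] [NormedAddCommGroup X] [NormedSpace 𝕜 X]
  {C : X →L[𝕜] X}

theorem IsCompactOperator.add_pow_sub_pow (hC : IsCompactOperator C) (N : X →L[𝕜] X) (k : ℕ) :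
    IsCompactOperator ⇑((C + N) ^ k - N ^ k) := by
  induction k with
  | zero => simpa using isCompactOperator_zero
  | succ k ih =>
    have : (C + N) ^ (k + 1) - N ^ (k + 1) = ((C + N) ^ k - N ^ k) * (C + N) + N ^ k * C := by
      noncomm_ring
    rw [this]
    exact (ih.comp_clm (C + N)).add (hC.clm_comp (N ^ k))

theorem IsCompactOperator.exists_pow_add_of_isNilpotent (hC : IsCompactOperator C)
    {N : X →L[𝕜] X} (hN : IsNilpotent N) : ∃ k, IsCompactOperator ⇑((C + N) ^ k) := by
  obtain ⟨k, hk⟩ := hN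
  exact ⟨k, by simpa [hk] using hC.add_pow_sub_pow N k⟩

variable [CompleteSpace X]

theorem IsCompactOperator.hasEigenvalue_or_mem_resolventSet_add (hC : IsCompactOperator C)
    {N : X →L[𝕜] X} {μ : 𝕜} (hμ : μ ∈ resolventSet 𝕜 N) :
    HasEigenvalue ((C + N : X →L[𝕜] X) : End 𝕜 X) μ ∨ μ ∈ resolventSet 𝕜 (C + N) := by
  obtain ⟨a, ha⟩ := spectrum.mem_resolventSet_iff.1 hμ
  have hfactor : algebraMap 𝕜 _ μ - (C + N) = ↑a * (1 - ↑a⁻¹ * C) := by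
    rw [mul_sub, mul_one, ← mul_assoc, a.mul_inv, one_mul, ha]; abel
  have hK : IsCompactOperator ⇑(↑a⁻¹ * C) := hC.clm_comp _
  rcases hK.hasEigenvalue_or_mem_resolventSet one_ne_zero with h | h
  · left
    obtain ⟨v, hv⟩ := h.exists_hasEigenvector
    refine hasEigenvalue_of_hasEigenvector ⟨?_, hv.2⟩
    have hKv : (↑a⁻¹ : X →L[𝕜] X) (C v) = v := by simpa using hv.apply_eq_smul
    have : (algebraMap 𝕜 _ μ - (C + N)) v = 0 := by simp [hfactor, hKv]
    rw [mem_eigenspace_iff, eq_comm, ← sub_eq_zero]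
    simpa using this
  · right
    rw [spectrum.mem_resolventSet_iff, map_one] at h
    rw [spectrum.mem_resolventSet_iff, hfactor]
    exact a.isUnit.mul h

end CompactPerturbation

open ContinuousLinearMap in
theorem exists_isCompactOperator_add_sq_eq_zero_of_blocks {𝕜 E : Type*}
    [NontriviallyNormedField 𝕜] [NormedAddCommGroup E] [NormedSpace 𝕜 E] (R : E × E →L[𝕜] E × E)
    (h₁₁ : IsCompactOperator fun x : E ↦ (R (x, 0)).1)
    (h₁₂ : IsCompactOperator fun x : E ↦ (R (0, x)).1)
    (h₂₂ : IsCompactOperator fun x : E ↦ (R (0, x)).2) :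
    ∃ C N : E × E →L[𝕜] E × E, IsCompactOperator C ∧ N ^ 2 = 0 ∧ R = C + N := by
  let N : E × E →L[𝕜] E × E := inr 𝕜 E E ∘L snd 𝕜 E E ∘L R ∘L inl 𝕜 E E ∘L fst 𝕜 E E
  have hN p : N p = (0, (R (p.1, 0)).2) := rfl
  refine ⟨R - N, N, ?_, ?_, by abel⟩
  · have hsplit p : R p = R (p.1, 0) + R (0, p.2) := by rw [← map_add]; simp
    have h₁ : IsCompactOperator fun p : E × E ↦ ((R (p.1, 0)).1, (0 : E)) :=
      (h₁₁.comp_clm (fst 𝕜 E E)).clm_comp (inl 𝕜 E E)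
    have h₂ : IsCompactOperator fun p : E × E ↦ ((R (0, p.2)).1, (0 : E)) :=
      (h₁₂.comp_clm (snd 𝕜 E E)).clm_comp (inl 𝕜 E E)
    have h₃ : IsCompactOperator fun p : E × E ↦ ((0 : E), (R (0, p.2)).2) :=
      (h₂₂.comp_clm (snd 𝕜 E E)).clm_comp (inr 𝕜 E E)
    have hC : ⇑(R - N) = (fun p : E × E ↦ ((R (p.1, 0)).1, (0 : E)))
        + (fun p ↦ ((R (0, p.2)).1, 0)) + (fun p ↦ (0, (R (0, p.2)).2)) := by
      funext p
      ext <;> simp [hN, hsplit p]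
    rw [hC]
    exact (h₁.add h₂).add h₃
  · ext p <;> simp [sq, hN, Prod.mk_zero_zero]

section UnboundedOperator

variable {𝕜 X : Type*} [NontriviallyNormedField 𝕜] [NormedAddCommGroup X] [NormedSpace 𝕜 X]

def HasBoundedResolvent {Dom : Submodule 𝕜 X} (B : Dom →ₗ[𝕜] X) (m : 𝕜) : Prop :=
  ∃ S : X →L[𝕜] X, ∃ hS : ∀ y, S y ∈ Dom,
    (∀ y : X, B ⟨S y, hS y⟩ - m • (S y) = y) ∧ (∀ x : Dom, S (B x - m • (x : X)) = (x : X))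

variable {Dom : Submodule 𝕜 X} {B : Dom →ₗ[𝕜] X} {lam m : 𝕜} {R : X →L[𝕜] X}

theorem hasBoundedResolvent_of_isUnit (hRmem : ∀ y, R y ∈ Dom)
    (hRright : ∀ y, B ⟨R y, hRmem y⟩ - lam • R y = y)
    (hRleft : ∀ x : Dom, R (B x - lam • (x : X)) = x) (h : IsUnit (1 - (m - lam) • R)) :
    HasBoundedResolvent B m := by
  obtain ⟨u, hu⟩ := h
  set W : X →L[𝕜] X := ↑u⁻¹
  have hW₁ y : (1 - (m - lam) • R) (W y) = y := by
    rw [← hu, ← mul_apply_eq_comp, u.mul_inv]; rfl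
  have hW₂ x : W ((1 - (m - lam) • R) x) = x := by
    rw [← hu, ← mul_apply_eq_comp, u.inv_mul]; rfl
  have hcomm : Commute R W := by
    refine Commute.units_inv_right ?_
    rw [hu]
    exact ((Commute.one_right R).sub_right ((Commute.refl R).smul_right _))
  have hm : m = lam + (m - lam) := by ring
  refine ⟨R * W, fun y ↦ hRmem (W y), fun y ↦ ?_, fun x ↦ ?_⟩
  · change B ⟨R (W y), hRmem (W y)⟩ - m • R (W y) = y
    rw [hm, add_smul, ← sub_sub, hRright]
    simpa using hW₁ y
  · rw [hcomm.eq, mul_apply_eq_comp, hm, add_smul, ← sub_sub, map_sub, map_smul, hRleft]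
    simpa using hW₂ x

theorem exists_eigenvector_of_hasEigenvalue (hRmem : ∀ y, R y ∈ Dom)
    (hRright : ∀ y, B ⟨R y, hRmem y⟩ - lam • R y = y) (hm : m ≠ lam)
    (h : HasEigenvalue (R : End 𝕜 X) (m - lam)⁻¹) :
    ∃ x : Dom, (x : X) ≠ 0 ∧ B x = m • (x : X) := by
  obtain ⟨u, hu⟩ := h.exists_hasEigenvector
  have hRu : R u = (m - lam)⁻¹ • u := hu.apply_eq_smul
  have hz : m - lam ≠ 0 := sub_ne_zero.2 hm
  refine ⟨⟨R u, hRmem u⟩, by simpa [hRu, hz] using hu.2, ?_⟩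
  calc B ⟨R u, hRmem u⟩ = u + lam • R u := sub_eq_iff_eq_add.1 (hRright u)
    _ = (m - lam) • R u + lam • R u := by rw [hRu, smul_inv_smul₀ hz]
    _ = m • R u := by rw [← add_smul, sub_add_cancel]

theorem hasEigenvalue_of_not_hasBoundedResolvent (hRmem : ∀ y, R y ∈ Dom)
    (hRright : ∀ y, B ⟨R y, hRmem y⟩ - lam • R y = y)
    (hRleft : ∀ x : Dom, R (B x - lam • (x : X)) = x)
    (hR : ∀ μ ≠ 0, HasEigenvalue (R : End 𝕜 X) μ ∨ μ ∈ resolventSet 𝕜 R)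
    (hm : ¬ HasBoundedResolvent B m) : m ≠ lam ∧ HasEigenvalue (R : End 𝕜 X) (m - lam)⁻¹ := by
  have hne : m ≠ lam := by rintro rfl; exact hm ⟨R, hRmem, hRright, hRleft⟩
  have hz : m - lam ≠ 0 := sub_ne_zero.2 hne
  refine ⟨hne, (hR _ (inv_ne_zero hz)).resolve_right fun h ↦ hm ?_⟩
  exact hasBoundedResolvent_of_isUnit hRmem hRright hRleft
    (isUnit_one_sub_smul_of_inv_mem_resolventSet hz h)

theorem mem_maxGenEigenspace_of_chain
    (hRleft : ∀ x : Dom, R (B x - lam • (x : X)) = x) (hm : m ≠ lam) {y : ℕ → X} {n : ℕ}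
    (hyn : y n = 0) (hy : ∀ j < n, ∃ h : y j ∈ Dom, y (j + 1) = B ⟨y j, h⟩ - m • y j) :
    y 0 ∈ maxGenEigenspace (R : End 𝕜 X) (m - lam)⁻¹ := by
  set μ := (m - lam)⁻¹
  have hstep j (hj : j < n) : ((R : End 𝕜 X) - μ • 1) (y j) = -μ • R (y (j + 1)) := by
    obtain ⟨hjDom, hjy⟩ := hy j hj
    have : R (y (j + 1)) = y j - (m - lam) • R (y j) := by
      rw [hjy, show B ⟨y j, hjDom⟩ - m • y j = (B ⟨y j, hjDom⟩ - lam • y j) - (m - lam) • y j by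
        rw [sub_smul]; abel, map_sub, map_smul]
      exact congrArg (· - (m - lam) • R (y j)) (hRleft ⟨y j, hjDom⟩)
    rw [this, smul_sub, smul_smul, neg_mul, inv_mul_cancel₀ (sub_ne_zero.2 hm)]
    simp [sub_eq_add_neg, add_comm]
  have key i (hi : i ≤ n) : y (n - i) ∈ maxGenEigenspace (R : End 𝕜 X) μ := by
    induction i with
    | zero => simp [hyn]
    | succ i ih =>
      refine mem_maxGenEigenspace_of_sub_smul_mem ?_
      rw [hstep _ (by omega), show n - (i + 1) + 1 = n - i by omega]
      exact Submodule.smul_mem _ _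
        (mapsTo_maxGenEigenspace_of_comm (Commute.refl _) μ (ih (by omega)))
  simpa using key n le_rfl

end UnboundedOperator

theorem not_accPt_of_finite_inter_mem_nhds {X : Type*} [TopologicalSpace X] [T1Space X]
    {S U : Set X} {z : X} (hU : U ∈ 𝓝 z) (hfin : (S ∩ U).Finite) : ¬ AccPt z (𝓟 S) := by
  intro h
  have : AccPt z (𝓟 (S ∩ U)) := accPt_iff_frequently.2 <|
    ((accPt_iff_frequently.1 h).and_eventually hU).mono fun _ ⟨⟨hyz, hyS⟩, hyU⟩ ↦ ⟨hyz, hyS, hyU⟩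
  exact Set.Infinite.of_accPt this hfin

theorem not_accPt_of_forall_inv_sub_mem {𝕜 : Type*} [NormedField 𝕜] {S E : Set 𝕜} {lam z : 𝕜}
    (hE : ∀ δ > 0, {μ | μ ∈ E ∧ δ ≤ ‖μ‖}.Finite) (hS : ∀ m ∈ S, m ≠ lam ∧ (m - lam)⁻¹ ∈ E) :
    ¬ AccPt z (𝓟 S) := by
  refine not_accPt_of_finite_inter_mem_nhds (Metric.ball_mem_nhds z one_pos) ?_
  refine ((hE (‖z - lam‖ + 1)⁻¹ (by positivity)).image fun μ ↦ lam + μ⁻¹).subset ?_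
  rintro m ⟨hm, hball⟩
  obtain ⟨hne, hmE⟩ := hS m hm
  refine ⟨(m - lam)⁻¹, ⟨hmE, ?_⟩, by simp⟩
  rw [norm_inv]
  refine inv_anti₀ (norm_pos_iff.2 (sub_ne_zero.2 hne)) ?_
  have := norm_sub_le_norm_sub_add_norm_sub m z lam
  rw [Metric.mem_ball, dist_eq_norm] at hball
  linarith

theorem utc_resolvent_spectrum_discrete_general
    (H : Type) [NormedAddCommGroup H] [InnerProductSpace ℂ H] [CompleteSpace H]
    (Dom : Submodule ℂ (H × H)) (B : Dom →ₗ[ℂ] (H × H))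
    (lam : ℂ) (R : (H × H) →L[ℂ] (H × H))
    (hRmem : ∀ y, R y ∈ Dom)
    (hRright : ∀ y : H × H, B ⟨R y, hRmem y⟩ - lam • (R y) = y)
    (hRleft : ∀ x : Dom, R (B x - lam • (x : H × H)) = (x : H × H))
    (hR11 : IsCompactOperator (fun x : H => (R (x, 0)).1))
    (hR12 : IsCompactOperator (fun x : H => (R (0, x)).1))
    (hR22 : IsCompactOperator (fun x : H => (R (0, x)).2)) :
    -- resolvent set predicate: B − m has a bounded two-sided inverse
    let Res : ℂ → Prop := fun m =>
      ∃ S : (H × H) →L[ℂ] (H × H), ∃ hS : ∀ y, S y ∈ Dom,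
        (∀ y : H × H, B ⟨S y, hS y⟩ - m • (S y) = y) ∧
        (∀ x : Dom, S (B x - m • (x : H × H)) = (x : H × H))
    let Spec : Set ℂ := {m | ¬ Res m}
    -- the spectrum is discrete,
    (∀ z : ℂ, ¬ AccPt z (Filter.principal Spec)) ∧
    -- consists of eigenvalues of B,
    (∀ m ∈ Spec, ∃ x : Dom, (x : H × H) ≠ 0 ∧ B x = m • (x : H × H)) ∧
    -- and the generalized eigenspaces are finite dimensional
    (∀ m ∈ Spec, FiniteDimensional ℂ (Submodule.span ℂ
      {x : H × H | ∃ mm : ℕ, 1 ≤ mm ∧ ∃ y : ℕ → H × H, y 0 = x ∧ y mm = 0 ∧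
        ∀ j < mm, ∃ h : y j ∈ Dom, y (j + 1) = B ⟨y j, h⟩ - m • (y j)})) := by
  intro Res Spec
  obtain ⟨C, N, hC, hN, hRCN⟩ := exists_isCompactOperator_add_sq_eq_zero_of_blocks R hR11 hR12 hR22
  obtain ⟨k, hk⟩ : ∃ k, IsCompactOperator ⇑(R ^ k) :=
    hRCN ▸ hC.exists_pow_add_of_isNilpotent ⟨2, hN⟩
  have hfred μ (hμ : μ ≠ 0) : HasEigenvalue (R : End ℂ (H × H)) μ ∨ μ ∈ resolventSet ℂ R :=
    hRCN ▸ hC.hasEigenvalue_or_mem_resolventSet_add (mem_resolventSet_of_isNilpotent ⟨2, hN⟩ hμ)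
  have hEig m (hm : m ∈ Spec) :=
    hasEigenvalue_of_not_hasBoundedResolvent hRmem hRright hRleft hfred hm
  refine ⟨fun z ↦ ?_, fun m hm ↦ ?_, fun m hm ↦ ?_⟩
  · exact not_accPt_of_forall_inv_sub_mem
      (fun δ hδ ↦ hk.finite_setOf_hasEigenvalue_le_norm_of_pow hδ) hEig
  · exact exists_eigenvector_of_hasEigenvalue hRmem hRright (hEig m hm).1 (hEig m hm).2
  · have := hk.finiteDimensional_maxGenEigenspace_of_pow (inv_ne_zero (sub_ne_zero.2 (hEig m hm).1))
    refine Submodule.finiteDimensional_of_le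
      (S₂ := maxGenEigenspace (R : End ℂ (H × H)) (m - lam)⁻¹) (Submodule.span_le.2 ?_)
    rintro _ ⟨n, -, y, rfl, hyn, hy⟩
    exact mem_maxGenEigenspace_of_chain hRleft (hEig m hm).1 hyn hy

/-- upper-triangular-compact resolvent theorem, special case of
Theorem 3.5 of Sylvester: if a closed densely defined operator B on H × H has, at
some point λ, a bounded inverse (B − λ)⁻¹ whose matrix components R₁₁, R₁₂, R₂₂ are
compact, then the spectrum of B is a discrete set of eigenvalues with
finite-dimensional generalized eigenspaces. -/
theorem utc_resolvent_spectrum_discrete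
    (H : Type) [NormedAddCommGroup H] [InnerProductSpace ℂ H] [CompleteSpace H]
    (Dom : Submodule ℂ (H × H)) (B : Dom →ₗ[ℂ] (H × H))
    (hdense : Dense (Dom : Set (H × H)))
    (hclosed : IsClosed {p : (H × H) × (H × H) | ∃ h : p.1 ∈ Dom, B ⟨p.1, h⟩ = p.2})
    (lam : ℂ) (R : (H × H) →L[ℂ] (H × H))
    (hRmem : ∀ y, R y ∈ Dom)
    (hRright : ∀ y : H × H, B ⟨R y, hRmem y⟩ - lam • (R y) = y)
    (hRleft : ∀ x : Dom, R (B x - lam • (x : H × H)) = (x : H × H))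
    (hR11 : IsCompactOperator (fun x : H => (R (x, 0)).1))
    (hR12 : IsCompactOperator (fun x : H => (R (0, x)).1))
    (hR22 : IsCompactOperator (fun x : H => (R (0, x)).2)) :
    -- resolvent set predicate: B − m has a bounded two-sided inverse
    let Res : ℂ → Prop := fun m =>
      ∃ S : (H × H) →L[ℂ] (H × H), ∃ hS : ∀ y, S y ∈ Dom,
        (∀ y : H × H, B ⟨S y, hS y⟩ - m • (S y) = y) ∧
        (∀ x : Dom, S (B x - m • (x : H × H)) = (x : H × H))
    let Spec : Set ℂ := {m | ¬ Res m}
    -- the spectrum is discrete,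
    (∀ z : ℂ, ¬ AccPt z (Filter.principal Spec)) ∧
    -- consists of eigenvalues of B,
    (∀ m ∈ Spec, ∃ x : Dom, (x : H × H) ≠ 0 ∧ B x = m • (x : H × H)) ∧
    -- and the generalized eigenspaces are finite dimensional
    (∀ m ∈ Spec, FiniteDimensional ℂ (Submodule.span ℂ
      {x : H × H | ∃ mm : ℕ, 1 ≤ mm ∧ ∃ y : ℕ → H × H, y 0 = x ∧ y mm = 0 ∧
        ∀ j < mm, ∃ h : y j ∈ Dom, y (j + 1) = B ⟨y j, h⟩ - m • (y j)})) :=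
  utc_resolvent_spectrum_discrete_general H Dom B lam R hRmem hRright hRleft hR11 hR12 hR22
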